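/- arXiv:math/0207163 — 2 statements merged into one kernel-verified Lean document; each statement's English description precedes it below -/
import Mathlib

section
/- Let A and B be finitely generated commutative ℤ-algebras such that A ⊗_ℤ ℚ and B ⊗_ℤ ℚ are isomorphic as ℚ-algebras. Then for all sufficiently large primes p, the number of ring homomorphisms from A to the field ℤ/pℤ equals the number of ring homomorphisms from B to ℤ/pℤ (both numbers being finite). -/
open TensorProduct

/-!
Write `A[1/N]` for `Localization.Away (N : A)`. The kernel of `A → ℚ ⊗ A` is a finitely generated
ideal of `ℤ`-torsion elements, hence killed by a single integer `M ≠ 0`; so for `M ∣ N` the ring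
`A[1/N]` embeds into `ℚ ⊗ A`, with image the `x` such that `x * N ^ k` comes from `A` for some `k`.
Every element of `ℚ ⊗ A` lies in such an image, and `A` and `B` are finitely generated, so for a
suitable `N` an isomorphism `ℚ ⊗ A ≃ ℚ ⊗ B` and its inverse match up these images, which gives
`A[1/N] ≃+* B[1/N]`. Finally, for a prime `p ∤ N`, ring homomorphisms `A → ℤ/pℤ` are the same as
ring homomorphisms `A[1/N] → ℤ/pℤ`.
-/

theorem Ideal.exists_natCast_mul_eq_zero_of_fg {A : Type*} [CommRing A] {I : Ideal A}
    (hI : I.FG) (h : ∀ a ∈ I, ∃ m : ℕ, m ≠ 0 ∧ (m : A) * a = 0) :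
    ∃ m : ℕ, m ≠ 0 ∧ ∀ a ∈ I, (m : A) * a = 0 := by
  classical
  obtain ⟨s, rfl⟩ := hI
  choose m hm0 hm using fun x : s => h x (Ideal.subset_span x.2)
  refine ⟨∏ x ∈ s.attach, m x, Finset.prod_ne_zero_iff.mpr fun x _ => hm0 x, fun a ha => ?_⟩
  have hann : ((∏ x ∈ s.attach, m x : ℕ) : A) ∈ (Ideal.span (s : Set A)).annihilator := by
    rw [Submodule.mem_annihilator_span]
    intro x
    rw [← Finset.prod_erase_mul _ _ (Finset.mem_attach _ x), Nat.cast_mul, smul_eq_mul,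
      mul_assoc, hm, mul_zero]
  exact Submodule.mem_annihilator.mp hann a ha

theorem IsLocalization.Away.natCard_ringHom_eq {R S K : Type*} [CommSemiring R] [CommSemiring S]
    [Algebra R S] [CommSemiring K] (r : R) [IsLocalization.Away r S]
    (h : ∀ g : R →+* K, IsUnit (g r)) :
    Nat.card (S →+* K) = Nat.card (R →+* K) :=
  Nat.card_congr <| Equiv.ofBijective (fun g => g.comp (algebraMap R S))
    ⟨fun _ _ hg => IsLocalization.ringHom_ext (Submonoid.powers r) hg,
      fun g => ⟨IsLocalization.Away.lift r (h g), IsLocalization.Away.lift_comp r (h g)⟩⟩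

theorem RingEquiv.natCard_ringHom_congr {R S K : Type*} [Ring R] [Ring S] [Ring K]
    (e : R ≃+* S) : Nat.card (R →+* K) = Nat.card (S →+* K) :=
  Nat.card_congr <| (RingHom.equivIntAlgHom R K).trans <|
    (AlgEquiv.arrowCongr e.toIntAlgEquiv AlgEquiv.refl).trans (RingHom.equivIntAlgHom S K).symm

theorem finite_ringHom_of_finiteType (A K : Type*) [CommRing A] [Algebra.FiniteType ℤ A]
    [Ring K] [Finite K] : Finite (A →+* K) := by
  obtain ⟨s, hs⟩ := Algebra.FiniteType.out (R := ℤ) (A := A)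
  refine Finite.of_injective (fun (g : A →+* K) (a : s) => g a) fun g₁ g₂ h => ?_
  exact RingHom.toIntAlgHom_injective
    (AlgHom.ext_of_adjoin_eq_top hs fun a ha => congrFun h ⟨a, ha⟩)

section RatTensor

variable {A B : Type*} [CommRing A] [CommRing B]

theorem exists_natCast_mul_eq_zero_of_one_tmul_eq_zero {a : A} (ha : (1 : ℚ) ⊗ₜ[ℤ] a = 0) :
    ∃ m : ℕ, m ≠ 0 ∧ (m : A) * a = 0 := by
  have : IsLocalizedModule (nonZeroDivisors ℤ) (TensorProduct.mk ℤ ℚ A 1) :=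
    (isLocalizedModule_iff_isBaseChange _ ℚ _).mpr (TensorProduct.isBaseChange ℤ A ℚ)
  obtain ⟨⟨s, hs⟩, hsa⟩ :=
    (IsLocalizedModule.eq_zero_iff (nonZeroDivisors ℤ) (TensorProduct.mk ℤ ℚ A 1)).mp ha
  refine ⟨s.natAbs, Int.natAbs_ne_zero.mpr (nonZeroDivisors.coe_ne_zero ⟨s, hs⟩), ?_⟩
  rw [Submonoid.mk_smul, zsmul_eq_mul] at hsa
  rcases Int.natAbs_eq s with h | h <;> rw [h] at hsa <;> simpa using hsa

variable (A) in
theorem exists_natCast_mul_eq_zero_of_finiteType [Algebra.FiniteType ℤ A] :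
    ∃ m : ℕ, m ≠ 0 ∧ ∀ a : A, (1 : ℚ) ⊗ₜ[ℤ] a = 0 → (m : A) * a = 0 :=
  have : IsNoetherianRing A := Algebra.FiniteType.isNoetherianRing ℤ A
  Ideal.exists_natCast_mul_eq_zero_of_fg
    (IsNoetherian.noetherian (RingHom.ker (Algebra.TensorProduct.includeRight : A →ₐ[ℤ] ℚ ⊗[ℤ] A)))
    fun _ ha => exists_natCast_mul_eq_zero_of_one_tmul_eq_zero ha

variable (A) in
theorem isUnit_natCast_ratTensor {N : ℕ} (hN : N ≠ 0) : IsUnit (N : ℚ ⊗[ℤ] A) := by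
  rw [← map_natCast (algebraMap ℚ (ℚ ⊗[ℤ] A))]
  exact (Nat.cast_ne_zero.mpr hN).isUnit.map _

theorem one_tmul_mul_natCast_pow (a : A) (c k : ℕ) :
    (1 : ℚ) ⊗ₜ[ℤ] a * (c : ℚ ⊗[ℤ] A) ^ k = 1 ⊗ₜ (a * (c : A) ^ k) := by
  rw [← Algebra.TensorProduct.includeRight_apply, ← Algebra.TensorProduct.includeRight_apply,
    map_mul, map_pow, map_natCast]

variable (A) in
noncomputable def awayToRatTensor (N : ℕ) (hN : N ≠ 0) :
    Localization.Away (N : A) →+* ℚ ⊗[ℤ] A :=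
  Localization.awayLift Algebra.TensorProduct.includeRight.toRingHom _
    (by rw [map_natCast]; exact isUnit_natCast_ratTensor A hN)

section
variable {N : ℕ} (hN : N ≠ 0)

theorem awayToRatTensor_algebraMap (a : A) :
    awayToRatTensor A N hN (algebraMap A _ a) = 1 ⊗ₜ a :=
  IsLocalization.lift_eq _ a

theorem awayToRatTensor_algebraMap_natCast_pow (k : ℕ) :
    awayToRatTensor A N hN (algebraMap A _ ((N : A) ^ k)) = (N : ℚ ⊗[ℤ] A) ^ k := by
  rw [awayToRatTensor_algebraMap, ← Algebra.TensorProduct.includeRight_apply, map_pow,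
    map_natCast]

theorem mem_range_awayToRatTensor_iff {x : ℚ ⊗[ℤ] A} :
    x ∈ (awayToRatTensor A N hN).range ↔
      ∃ (k : ℕ) (a : A), x * (N : ℚ ⊗[ℤ] A) ^ k = 1 ⊗ₜ a := by
  constructor
  · rintro ⟨z, rfl⟩
    obtain ⟨⟨a, ⟨_, k, rfl⟩⟩, hz⟩ := IsLocalization.surj (Submonoid.powers (N : A)) z
    refine ⟨k, a, ?_⟩
    rw [← awayToRatTensor_algebraMap_natCast_pow hN, ← map_mul, hz, awayToRatTensor_algebraMap]
  · rintro ⟨k, a, hx⟩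
    refine ⟨IsLocalization.mk' _ a (⟨_, k, rfl⟩ : Submonoid.powers (N : A)), ?_⟩
    rw [← ((isUnit_natCast_ratTensor A hN).pow k).mul_left_inj, hx,
      ← awayToRatTensor_algebraMap_natCast_pow hN, ← map_mul, IsLocalization.mk'_spec,
      awayToRatTensor_algebraMap]

theorem mem_range_awayToRatTensor_of_mul_pow_mem {x : ℚ ⊗[ℤ] A} {k : ℕ}
    (hx : x * (N : ℚ ⊗[ℤ] A) ^ k ∈ (awayToRatTensor A N hN).range) :
    x ∈ (awayToRatTensor A N hN).range := by
  obtain ⟨j, a, hx⟩ := (mem_range_awayToRatTensor_iff hN).mp hx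
  exact (mem_range_awayToRatTensor_iff hN).mpr ⟨k + j, a, by rw [pow_add, ← mul_assoc, hx]⟩

theorem range_awayToRatTensor_mono {N' : ℕ} (hN' : N' ≠ 0) (h : N ∣ N') :
    (awayToRatTensor A N hN).range ≤ (awayToRatTensor A N' hN').range := by
  obtain ⟨c, rfl⟩ := h
  intro x hx
  obtain ⟨k, a, hx⟩ := (mem_range_awayToRatTensor_iff hN).mp hx
  refine (mem_range_awayToRatTensor_iff hN').mpr ⟨k, a * (c : A) ^ k, ?_⟩
  rw [Nat.cast_mul, mul_pow, ← mul_assoc, hx, one_tmul_mul_natCast_pow]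

theorem awayToRatTensor_injective {M : ℕ} (hM : M ∣ N)
    (htors : ∀ a : A, (1 : ℚ) ⊗ₜ[ℤ] a = 0 → (M : A) * a = 0) :
    Function.Injective (awayToRatTensor A N hN) := by
  refine (IsLocalization.injective_iff_map_algebraMap_eq (Submonoid.powers (N : A)) _).mpr
    fun a b => ⟨congrArg _, fun hab => ?_⟩
  rw [awayToRatTensor_algebraMap, awayToRatTensor_algebraMap, ← sub_eq_zero, ← tmul_sub] at hab
  rw [← sub_eq_zero, ← map_sub,
    ← (IsLocalization.Away.algebraMap_isUnit (N : A)).mul_right_eq_zero, ← map_mul]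
  obtain ⟨c, rfl⟩ := hM
  rw [Nat.cast_mul, mul_right_comm, htors _ hab, zero_mul, map_zero]

theorem map_range_awayToRatTensor_le (φ : ℚ ⊗[ℤ] A →ₐ[ℚ] ℚ ⊗[ℤ] B)
    (hφ : ∀ a : A, φ (1 ⊗ₜ a) ∈ (awayToRatTensor B N hN).range) :
    (awayToRatTensor A N hN).range.map (φ : ℚ ⊗[ℤ] A →+* ℚ ⊗[ℤ] B) ≤
      (awayToRatTensor B N hN).range := by
  rintro _ ⟨x, hx, rfl⟩
  obtain ⟨k, a, hx⟩ := (mem_range_awayToRatTensor_iff hN).mp hx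
  refine mem_range_awayToRatTensor_of_mul_pow_mem hN (k := k) ?_
  have : φ x * (N : ℚ ⊗[ℤ] B) ^ k = φ (1 ⊗ₜ a) := by rw [← hx, map_mul, map_pow, map_natCast]
  exact this ▸ hφ a

end

variable (A) in
theorem exists_mem_range_awayToRatTensor (x : ℚ ⊗[ℤ] A) :
    ∃ (N : ℕ) (hN : N ≠ 0), x ∈ (awayToRatTensor A N hN).range := by
  induction x using TensorProduct.induction_on with
  | zero => exact ⟨1, one_ne_zero, zero_mem _⟩
  | tmul q a =>
    refine ⟨q.den, q.den_ne_zero, (mem_range_awayToRatTensor_iff _).mpr ⟨1, q.num • a, ?_⟩⟩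
    rw [pow_one, ← map_natCast (algebraMap ℚ (ℚ ⊗[ℤ] A)), Algebra.TensorProduct.algebraMap_apply,
      Algebra.TensorProduct.tmul_mul_tmul, mul_one, Algebra.algebraMap_self, RingHom.id_apply,
      Rat.mul_den_eq_num, ← TensorProduct.smul_tmul, zsmul_one]
  | add x y hx hy =>
    obtain ⟨Nx, hNx, hx⟩ := hx
    obtain ⟨Ny, hNy, hy⟩ := hy
    exact ⟨Nx * Ny, mul_ne_zero hNx hNy,
      add_mem (range_awayToRatTensor_mono hNx _ (dvd_mul_right _ _) hx)
        (range_awayToRatTensor_mono hNy _ (dvd_mul_left _ _) hy)⟩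

theorem exists_forall_mem_range_awayToRatTensor [Algebra.FiniteType ℤ A]
    (f : A →+* ℚ ⊗[ℤ] B) :
    ∃ (N : ℕ) (hN : N ≠ 0), ∀ a, f a ∈ (awayToRatTensor B N hN).range := by
  obtain ⟨s, hs⟩ := Algebra.FiniteType.out (R := ℤ) (A := A)
  choose N hN hmem using fun a => exists_mem_range_awayToRatTensor B (f a)
  have hprod : ∏ a ∈ s, N a ≠ 0 := Finset.prod_ne_zero_iff.mpr fun a _ => hN a
  have hle : Algebra.adjoin ℤ (s : Set A) ≤
      subalgebraOfSubring ((awayToRatTensor B _ hprod).range.comap f) :=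
    Algebra.adjoin_le fun a ha =>
      range_awayToRatTensor_mono (hN a) hprod (Finset.dvd_prod_of_mem N ha) (hmem a)
  rw [hs] at hle
  exact ⟨_, hprod, fun a => hle Algebra.mem_top⟩

theorem exists_ringEquiv_away_of_algEquiv [Algebra.FiniteType ℤ A] [Algebra.FiniteType ℤ B]
    (φ : ℚ ⊗[ℤ] A ≃ₐ[ℚ] ℚ ⊗[ℤ] B) :
    ∃ N : ℕ, N ≠ 0 ∧ Nonempty (Localization.Away (N : A) ≃+* Localization.Away (N : B)) := by
  obtain ⟨MA, hMA0, htorsA⟩ := exists_natCast_mul_eq_zero_of_finiteType A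
  obtain ⟨MB, hMB0, htorsB⟩ := exists_natCast_mul_eq_zero_of_finiteType B
  obtain ⟨NA, hNA, hφ⟩ := exists_forall_mem_range_awayToRatTensor
    ((φ : ℚ ⊗[ℤ] A →+* ℚ ⊗[ℤ] B).comp Algebra.TensorProduct.includeRight.toRingHom)
  obtain ⟨NB, hNB, hψ⟩ := exists_forall_mem_range_awayToRatTensor
    ((φ.symm : ℚ ⊗[ℤ] B →+* ℚ ⊗[ℤ] A).comp Algebra.TensorProduct.includeRight.toRingHom)
  have hN : MA * MB * (NA * NB) ≠ 0 := by simp [*]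
  have hle : (awayToRatTensor A _ hN).range.map (φ : ℚ ⊗[ℤ] A →+* ℚ ⊗[ℤ] B) ≤
      (awayToRatTensor B _ hN).range :=
    map_range_awayToRatTensor_le hN φ.toAlgHom fun a =>
      range_awayToRatTensor_mono hNA hN ((dvd_mul_right NA NB).trans (dvd_mul_left _ _)) (hφ a)
  have hle' : (awayToRatTensor B _ hN).range.map (φ.symm : ℚ ⊗[ℤ] B →+* ℚ ⊗[ℤ] A) ≤
      (awayToRatTensor A _ hN).range :=
    map_range_awayToRatTensor_le hN φ.symm.toAlgHom fun b =>
      range_awayToRatTensor_mono hNB hN ((dvd_mul_left NB NA).trans (dvd_mul_left _ _)) (hψ b)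
  have hrange : (awayToRatTensor A _ hN).range.map φ.toRingEquiv.toRingHom =
      (awayToRatTensor B _ hN).range :=
    le_antisymm hle fun y hy => ⟨φ.symm y, hle' ⟨y, hy, rfl⟩, φ.apply_symm_apply y⟩
  have hMA : MA ∣ MA * MB * (NA * NB) := Dvd.intro (MB * (NA * NB)) (by ring)
  have hMB : MB ∣ MA * MB * (NA * NB) := Dvd.intro (MA * (NA * NB)) (by ring)
  have hinjA := awayToRatTensor_injective hN hMA htorsA
  have hinjB := awayToRatTensor_injective hN hMB htorsB
  have eA := RingEquiv.ofLeftInverse (Function.leftInverse_invFun hinjA)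
  have eB := RingEquiv.ofLeftInverse (Function.leftInverse_invFun hinjB)
  exact ⟨_, hN, ⟨eA.trans <| φ.toRingEquiv.subringMap.trans <|
    (RingEquiv.subringCongr hrange).trans eB.symm⟩⟩

end RatTensor

/-- If two finitely generated `ℤ`-algebras become isomorphic after tensoring with `ℚ`,
then they have the same (finite) number of homomorphisms to `ℤ/pℤ` for all
sufficiently large primes `p`. -/
theorem card_hom_to_zmod_eventually_eq
    (A : Type) [CommRing A] (B : Type) [CommRing B]
    (hA : Algebra.FiniteType ℤ A) (hB : Algebra.FiniteType ℤ B)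
    (h : Nonempty ((ℚ ⊗[ℤ] A) ≃ₐ[ℚ] (ℚ ⊗[ℤ] B))) :
    ∃ M : ℕ, ∀ p : ℕ, p.Prime → M ≤ p →
      Finite (A →+* ZMod p) ∧ Finite (B →+* ZMod p) ∧
        Nat.card (A →+* ZMod p) = Nat.card (B →+* ZMod p) := by
  obtain ⟨φ⟩ := h
  obtain ⟨N, hN, ⟨e⟩⟩ := exists_ringEquiv_away_of_algEquiv φ
  refine ⟨N + 1, fun p hp hNp => ?_⟩
  have : Fact p.Prime := ⟨hp⟩
  have hunit {R : Type} [CommRing R] (g : R →+* ZMod p) : IsUnit (g N) := by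
    rw [map_natCast, isUnit_iff_ne_zero, Ne, ZMod.natCast_eq_zero_iff]
    exact fun hdvd => absurd (Nat.le_of_dvd (Nat.pos_of_ne_zero hN) hdvd) (by omega)
  refine ⟨finite_ringHom_of_finiteType A _, finite_ringHom_of_finiteType B _, ?_⟩
  calc Nat.card (A →+* ZMod p)
      = Nat.card (Localization.Away (N : A) →+* ZMod p) :=
        (IsLocalization.Away.natCard_ringHom_eq _ hunit).symm
    _ = Nat.card (Localization.Away (N : B) →+* ZMod p) := e.natCard_ringHom_congr
    _ = Nat.card (B →+* ZMod p) := IsLocalization.Away.natCard_ringHom_eq _ hunit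
end

section
/- Let p be a prime and let f_1,…,f_r ∈ ℤ_p[x_1,…,x_m]. For every natural number n there exists a natural number N ≥ n such that for every x ∈ ℤ_p^m with ‖f_j(x)‖_p ≤ p^{−N} for all j, there exists y ∈ ℤ_p^m with f_j(y) = 0 for all j and ‖x_i − y_i‖_p ≤ p^{−n} for all i. -/
set_option maxHeartbeats 1000000


open MvPolynomial Filter Topology

/-- Greenberg's approximation theorem for `ℤ_p`: approximate solutions modulo `p^N` of a
system of polynomial equations over `ℤ_p` can be corrected to exact solutions congruent
to them modulo `p^n`. -/
theorem greenberg_padic (p : ℕ) [Fact p.Prime] {m r : ℕ}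
    (f : Fin r → MvPolynomial (Fin m) ℤ_[p]) (n : ℕ) :
    ∃ N : ℕ, n ≤ N ∧
      ∀ x : Fin m → ℤ_[p],
        (∀ j, ‖MvPolynomial.eval x (f j)‖ ≤ (p : ℝ) ^ (-(N : ℤ))) →
        ∃ y : Fin m → ℤ_[p],
          (∀ j, MvPolynomial.eval y (f j) = 0) ∧
          ∀ i, ‖x i - y i‖ ≤ (p : ℝ) ^ (-(n : ℤ)) := by
  by_contra hc
  push_neg at hc
  -- for each k, pick an approximate solution to level n+k with no nearby exact solution
  have hx : ∀ k : ℕ, ∃ x : Fin m → ℤ_[p],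
      (∀ j, ‖MvPolynomial.eval x (f j)‖ ≤ (p : ℝ) ^ (-((n + k : ℕ) : ℤ))) ∧
      ∀ y : Fin m → ℤ_[p],
        (∀ j, MvPolynomial.eval y (f j) = 0) →
        ∃ i, (p : ℝ) ^ (-(n : ℤ)) < ‖x i - y i‖ := by
    intro k
    obtain ⟨x, hx1, hx2⟩ := hc (n + k) (Nat.le_add_right n k)
    exact ⟨x, hx1, hx2⟩
  choose g hg1 hg2 using hx
  -- extract a convergent subsequence by compactness
  obtain ⟨y, -, φ, hφ, hlim⟩ := isCompact_univ.tendsto_subseq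
    (x := g) (fun k => Set.mem_univ _)
  have hp : (1 : ℝ) < (p : ℝ) := by
    exact_mod_cast (Fact.out : p.Prime).one_lt
  -- the limit is an exact solution
  have hy0 : ∀ j, MvPolynomial.eval y (f j) = 0 := by
    intro j
    have hcont : Tendsto (fun k => MvPolynomial.eval (g (φ k)) (f j)) atTop
        (𝓝 (MvPolynomial.eval y (f j))) :=
      (MvPolynomial.continuous_eval (p := f j)).continuousAt.tendsto.comp hlim
    have hnorm : Tendsto (fun k => ‖MvPolynomial.eval (g (φ k)) (f j)‖) atTop
        (𝓝 ‖MvPolynomial.eval y (f j)‖) := hcont.norm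
    have hub : Tendsto (fun k : ℕ => (p : ℝ) ^ (-((n + φ k : ℕ) : ℤ))) atTop (𝓝 0) := by
      have h1 : Tendsto (fun k : ℕ => ((p : ℝ)⁻¹) ^ (n + φ k)) atTop (𝓝 0) := by
        apply (tendsto_pow_atTop_nhds_zero_of_lt_one (by positivity)
          (by rw [inv_lt_one_iff₀]; right; exact hp)).comp
        exact tendsto_atTop_mono (fun k => Nat.le_add_left _ _) hφ.tendsto_atTop
      refine h1.congr fun k => ?_
      rw [inv_pow, ← zpow_natCast, ← zpow_neg]
    have hzero : Tendsto (fun k => ‖MvPolynomial.eval (g (φ k)) (f j)‖) atTop (𝓝 0) := by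
      refine squeeze_zero (fun k => norm_nonneg _) (fun k => hg1 (φ k) j) hub
    have := tendsto_nhds_unique hnorm hzero
    exact norm_eq_zero.mp this
  -- eventually each coordinate of the subsequence is within p^{-n} of y
  have hclose : ∀ᶠ k in atTop, ∀ i, ‖g (φ k) i - y i‖ ≤ (p : ℝ) ^ (-(n : ℤ)) := by
    rw [eventually_all]
    intro i
    have hi : Tendsto (fun k => ‖g (φ k) i - y i‖) atTop (𝓝 0) := by
      have : Tendsto (fun k => g (φ k) i) atTop (𝓝 (y i)) :=
        (continuous_apply i).continuousAt.tendsto.comp hlim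
      simpa using (this.sub_const (y i)).norm
    have hpos : (0 : ℝ) < (p : ℝ) ^ (-(n : ℤ)) :=
      zpow_pos (by linarith) _
    filter_upwards [hi.eventually (gt_mem_nhds hpos)] with k hk
    exact le_of_lt hk
  obtain ⟨k, hk⟩ := hclose.exists
  obtain ⟨i, hi⟩ := hg2 (φ k) y hy0
  exact absurd (hk i) (not_le.mpr hi)
end
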